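/- Let γ : [−ℓ/2, ℓ/2] → ℝ^d be an arc-length parametrization of a simple C² curve. Then for every u ∈ (−ℓ/2, ℓ/2), lim_{s↑1} (1−s)·k_s(u,γ) = −γ''(u), where k_s(u,γ) := s ∫ [ ((γ(u)−γ(v))·γ'(u))γ'(v) − (γ'(u)·γ'(v))(γ(u)−γ(v)) ] / |γ(u)−γ(v)|^{2+s} dv, the integral being over v ∈ [−ℓ/2, ℓ/2]. -/

import Mathlib

open MeasureTheory Real Filter Topology Set
open scoped RealInnerProductSpace
noncomputable section

/-- The `s`-fractional curvature of a simple `C²` arc-length parametrized curve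
`γ : [−ℓ/2, ℓ/2] → ℝ^d` at an interior parameter `u`. -/
def fracCurvature (d : ℕ) (ℓ s : ℝ) (γ γ' : ℝ → EuclideanSpace ℝ (Fin d)) (u : ℝ) :
    EuclideanSpace ℝ (Fin d) :=
  s • ∫ v in Set.Icc (-(ℓ / 2)) (ℓ / 2),
    (‖γ u - γ v‖ ^ (2 + s))⁻¹ •
      (⟪γ u - γ v, γ' u⟫ • γ' v - ⟪γ' u, γ' v⟫ • (γ u - γ v))

/-!
Write `t = v - u`. The Taylor expansions `γ v = γ u + t γ' u + (t² / 2) γ'' u + o(t²)` and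
`γ' v = γ' u + t γ'' u + o(t)`, together with `‖γ'‖ = 1` (hence `γ'' u ⟂ γ' u`), make the numerator
of the integrand `-(t² / 2) γ'' u + o(t²)`, while `‖γ u - γ v‖ = |t| (1 + o(1))`. So near `u` the
integrand is `|t| ^ (-s) (-γ'' u / 2 + o(1))` uniformly in `s ∈ [0, 1]`, and
`(1 - s) ∫_{|t| ≤ δ} |t| ^ (-s) dt = 2 δ ^ (1 - s) → 2` as `s ↑ 1`. Away from `u` the curve, being
simple, stays at positive distance from `γ u`, so there the integrand is bounded uniformly in `s`
and its contribution is killed by the factor `1 - s`.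
-/

open Asymptotics

theorem intervalIntegrable_abs_rpow {r : ℝ} (hr : -1 < r) (a b : ℝ) :
    IntervalIntegrable (fun x : ℝ => |x| ^ r) volume a b := by
  suffices h : ∀ c, IntervalIntegrable (fun x : ℝ => |x| ^ r) volume 0 c from
    (h a).symm.trans (h b)
  have hnonneg : ∀ c, 0 ≤ c → IntervalIntegrable (fun x : ℝ => |x| ^ r) volume 0 c := by
    intro c hc
    refine (intervalIntegral.intervalIntegrable_rpow' hr).congr ?_
    intro x hx
    rw [uIoc_of_le hc] at hx
    simp only [abs_of_pos hx.1]
  intro c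
  rcases le_total 0 c with hc | hc
  · exact hnonneg c hc
  · rw [IntervalIntegrable.iff_comp_neg, neg_zero]
    simpa only [abs_neg] using hnonneg (-c) (neg_nonneg.2 hc)

theorem integral_abs_rpow {r δ : ℝ} (hr : -1 < r) (hδ : 0 ≤ δ) :
    ∫ x in -δ..δ, |x| ^ r = 2 * (δ ^ (r + 1) / (r + 1)) := by
  have hright : ∫ x in (0:ℝ)..δ, |x| ^ r = δ ^ (r + 1) / (r + 1) := by
    rw [intervalIntegral.integral_congr (g := fun x => x ^ r), integral_rpow (Or.inl hr),
      zero_rpow (by linarith), sub_zero]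
    intro x hx
    rw [uIcc_of_le hδ] at hx
    simp only [abs_of_nonneg hx.1]
  have hleft : ∫ x in -δ..0, |x| ^ r = ∫ x in (0:ℝ)..δ, |x| ^ r := by
    simpa only [abs_neg, neg_zero, neg_neg] using
      intervalIntegral.integral_comp_neg (a := -δ) (b := 0) (fun x : ℝ => |x| ^ r)
  rw [← intervalIntegral.integral_add_adjacent_intervals (b := 0)
    (intervalIntegrable_abs_rpow hr _ _) (intervalIntegrable_abs_rpow hr _ _), hleft, hright]
  ring

theorem integrableOn_abs_sub_rpow_Icc {r : ℝ} (hr : -1 < r) (u δ : ℝ) :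
    IntegrableOn (fun v : ℝ => |v - u| ^ r) (Icc (u - δ) (u + δ)) := by
  have h := (intervalIntegrable_abs_rpow hr (-δ) δ).comp_sub_right u
  rw [intervalIntegrable_iff'] at h
  refine h.mono_set ?_
  rw [neg_add_eq_sub, add_comm]
  exact Icc_subset_uIcc

theorem setIntegral_abs_sub_rpow_Icc {r δ : ℝ} (hr : -1 < r) (u : ℝ) (hδ : 0 ≤ δ) :
    ∫ v in Icc (u - δ) (u + δ), |v - u| ^ r = 2 * (δ ^ (r + 1) / (r + 1)) := by
  rw [integral_Icc_eq_integral_Ioc, ← intervalIntegral.integral_of_le (by linarith),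
    intervalIntegral.integral_comp_sub_right (fun x => |x| ^ r), sub_sub_cancel_left,
    add_sub_cancel_left, integral_abs_rpow hr hδ]

theorem abs_rpow_sub_one_le_max {ρ a m n : ℝ} (hρ : 0 < ρ) (hma : m ≤ a) (han : a ≤ n) :
    |ρ ^ a - 1| ≤ max |ρ ^ m - 1| |ρ ^ n - 1| := by
  rcases le_total ρ 1 with h | h
  · rw [max_comm]
    exact abs_le_max_abs_abs (by linarith [rpow_le_rpow_of_exponent_ge hρ h han])
      (by linarith [rpow_le_rpow_of_exponent_ge hρ h hma])
  · exact abs_le_max_abs_abs (by linarith [rpow_le_rpow_of_exponent_le h hma])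
      (by linarith [rpow_le_rpow_of_exponent_le h han])

theorem exists_pos_le_dist_of_injOn {X : Type*} [MetricSpace X] {γ : ℝ → X} {a b u δ : ℝ}
    (hγ : ContinuousOn γ (Icc a b)) (hinj : InjOn γ (Icc a b)) (hu : u ∈ Icc a b) (hδ : 0 < δ) :
    ∃ m > 0, ∀ v ∈ Icc a b, δ ≤ |v - u| → m ≤ dist (γ u) (γ v) := by
  have hK : IsCompact (Icc a b ∩ {v | δ ≤ |v - u|}) :=
    isCompact_Icc.inter_right <|
      isClosed_le continuous_const (continuous_id.sub continuous_const).abs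
  have hpos : ∀ v ∈ Icc a b ∩ {v | δ ≤ |v - u|}, 0 < dist (γ u) (γ v) := by
    rintro v ⟨hv, hδv : δ ≤ |v - u|⟩
    refine dist_pos.2 fun h => ?_
    rw [← hinj hu hv h, sub_self, abs_zero] at hδv
    linarith
  obtain ⟨m, hm, hmK⟩ := hK.exists_forall_le'
    (((continuous_const.dist continuous_id).comp_continuousOn hγ).mono inter_subset_left) hpos
  exact ⟨m, hm, fun v hv hδv => hmK v ⟨hv, hδv⟩⟩

section NormedSpace

variable {E : Type*} [NormedAddCommGroup E] [NormedSpace ℝ E]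

theorem integrableOn_Icc_of_ae_norm_sub_rpow_smul_le {F : ℝ → E} {c : E} {u s δ ε : ℝ}
    (hs : s < 1) (hF : AEStronglyMeasurable F (volume.restrict (Icc (u - δ) (u + δ))))
    (hnear : ∀ᵐ v ∂(volume.restrict (Icc (u - δ) (u + δ))),
      ‖F v - |v - u| ^ (-s) • c‖ ≤ ε * |v - u| ^ (-s)) :
    IntegrableOn F (Icc (u - δ) (u + δ)) := by
  have hk := integrableOn_abs_sub_rpow_Icc (neg_lt_neg hs) u δ
  have hG : IntegrableOn (fun v => F v - |v - u| ^ (-s) • c) (Icc (u - δ) (u + δ)) :=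
    (hk.const_mul ε).mono' (hF.sub (hk.aestronglyMeasurable.smul_const c)) hnear
  exact (hG.add (hk.smul_const c)).congr_fun (fun v _ => sub_add_cancel _ _) measurableSet_Icc

theorem norm_one_sub_smul_setIntegral_Icc_sub_le [CompleteSpace E] {F : ℝ → E} {c : E}
    {u s δ ε : ℝ} (hs : s < 1) (hδ : 0 ≤ δ)
    (hF : AEStronglyMeasurable F (volume.restrict (Icc (u - δ) (u + δ))))
    (hnear : ∀ᵐ v ∂(volume.restrict (Icc (u - δ) (u + δ))),
      ‖F v - |v - u| ^ (-s) • c‖ ≤ ε * |v - u| ^ (-s)) :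
    ‖(1 - s) • (∫ v in Icc (u - δ) (u + δ), F v) - (2 * δ ^ (1 - s)) • c‖ ≤
      2 * ε * δ ^ (1 - s) := by
  have h1s : 0 < 1 - s := sub_pos.2 hs
  have hk := integrableOn_abs_sub_rpow_Icc (neg_lt_neg hs) u δ
  have hkJ : ∫ v in Icc (u - δ) (u + δ), |v - u| ^ (-s) = 2 * (δ ^ (1 - s) / (1 - s)) := by
    simpa only [neg_add_eq_sub] using setIntegral_abs_sub_rpow_Icc (neg_lt_neg hs) u hδ
  have hFJ := integrableOn_Icc_of_ae_norm_sub_rpow_smul_le hs hF hnear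
  have hsub : (1 - s) • (∫ v in Icc (u - δ) (u + δ), F v) - (2 * δ ^ (1 - s)) • c =
      (1 - s) • ∫ v in Icc (u - δ) (u + δ), (F v - |v - u| ^ (-s) • c) := by
    rw [integral_sub hFJ (hk.smul_const c), integral_smul_const, hkJ, smul_sub, smul_smul,
      show (1 - s) * (2 * (δ ^ (1 - s) / (1 - s))) = 2 * δ ^ (1 - s) by field_simp]
  rw [hsub, norm_smul, Real.norm_of_nonneg h1s.le]
  calc (1 - s) * ‖∫ v in Icc (u - δ) (u + δ), (F v - |v - u| ^ (-s) • c)‖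
      ≤ (1 - s) * (ε * (2 * (δ ^ (1 - s) / (1 - s)))) := by
        gcongr
        exact (norm_integral_le_of_norm_le (hk.const_mul ε) hnear).trans_eq
          (by rw [integral_const_mul, hkJ])
    _ = 2 * ε * δ ^ (1 - s) := by field_simp

theorem norm_one_sub_smul_setIntegral_sub_le_of_near_far [CompleteSpace E] {F : ℝ → E} {c : E}
    {a b u s δ ε M : ℝ} (hs : s < 1) (hδ : 0 ≤ δ) (hJ : Icc (u - δ) (u + δ) ⊆ Icc a b) (hM : 0 ≤ M)
    (hF : AEStronglyMeasurable F (volume.restrict (Icc a b)))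
    (hnear : ∀ v ∈ Icc (u - δ) (u + δ), v ≠ u →
      ‖F v - |v - u| ^ (-s) • c‖ ≤ ε * |v - u| ^ (-s))
    (hfar : ∀ v ∈ Icc a b, δ < |v - u| → ‖F v‖ ≤ M) :
    ‖(1 - s) • (∫ v in Icc a b, F v) - (2 * δ ^ (1 - s)) • c‖ ≤
      2 * ε * δ ^ (1 - s) + (1 - s) * (M * (b - a)) := by
  set I := Icc a b
  set J := Icc (u - δ) (u + δ)
  have hnear' : ∀ᵐ v ∂(volume.restrict J), ‖F v - |v - u| ^ (-s) • c‖ ≤ ε * |v - u| ^ (-s) := by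
    filter_upwards [ae_restrict_mem measurableSet_Icc,
      ae_restrict_of_ae ((countable_singleton u).ae_notMem volume)] with v hv hvu
    exact hnear v hv hvu
  have hfar' : ∀ v ∈ I \ J, ‖F v‖ ≤ M := by
    rintro v ⟨hvI, hvJ⟩
    exact hfar v hvI (not_le.1 fun h => hvJ (mem_Icc_iff_abs_le.1 (by rwa [abs_sub_comm])))
  have hμ : volume (I \ J) < ⊤ := (measure_mono sdiff_subset).trans_lt measure_Icc_lt_top
  have hFfar : IntegrableOn F (I \ J) :=
    (integrableOn_const hμ.ne).mono' (hF.mono_set sdiff_subset)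
      ((ae_restrict_iff' (measurableSet_Icc.diff measurableSet_Icc)).2 (.of_forall hfar'))
  have hsplit := setIntegral_union disjoint_sdiff_right (measurableSet_Icc.diff measurableSet_Icc)
    (integrableOn_Icc_of_ae_norm_sub_rpow_smul_le hs (hF.mono_set hJ) hnear') hFfar
  rw [union_sdiff_cancel hJ] at hsplit
  have hfarI : ‖∫ v in I \ J, F v‖ ≤ M * (b - a) := by
    refine (norm_setIntegral_le_of_norm_le_const hμ hfar').trans (mul_le_mul_of_nonneg_left ?_ hM)
    calc (volume (I \ J)).toReal ≤ (volume I).toReal :=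
          ENNReal.toReal_mono measure_Icc_lt_top.ne (measure_mono sdiff_subset)
      _ = b - a := by
          rw [Real.volume_Icc, ENNReal.toReal_ofReal
            (sub_nonneg.2 (nonempty_Icc.1 ⟨u, hJ ⟨by linarith, by linarith⟩⟩))]
  rw [hsplit, smul_add, add_sub_right_comm]
  refine (norm_add_le _ _).trans (add_le_add
    (norm_one_sub_smul_setIntegral_Icc_sub_le hs hδ (hF.mono_set hJ) hnear') ?_)
  rw [norm_smul, Real.norm_of_nonneg (sub_nonneg.2 hs.le)]
  exact mul_le_mul_of_nonneg_left hfarI (sub_nonneg.2 hs.le)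

theorem tendsto_one_sub_smul_setIntegral_of_near_far [CompleteSpace E] {F : ℝ → ℝ → E} {c : E}
    {a b u : ℝ} (hu : u ∈ Ioo a b)
    (hF : ∀ s ∈ Ioo (0:ℝ) 1, AEStronglyMeasurable (F s) (volume.restrict (Icc a b)))
    (hnear : ∀ ε > 0, ∀ᶠ v in 𝓝[≠] u, ∀ s ∈ Ioo (0:ℝ) 1,
      ‖F s v - |v - u| ^ (-s) • c‖ ≤ ε * |v - u| ^ (-s))
    (hfar : ∀ δ > 0, ∃ M, ∀ s ∈ Ioo (0:ℝ) 1, ∀ v ∈ Icc a b, δ ≤ |v - u| → ‖F s v‖ ≤ M) :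
    Tendsto (fun s => (1 - s) • ∫ v in Icc a b, F s v) (𝓝[<] 1) (𝓝 ((2:ℝ) • c)) := by
  rw [Metric.tendsto_nhds]
  intro ε hε
  obtain ⟨δ₀, hδ₀, hball⟩ := Metric.nhds_basis_closedBall.eventually_iff.1
    ((eventually_nhdsWithin_iff.1 (hnear (ε / 4) (by positivity))).and (Ioo_mem_nhds hu.1 hu.2))
  set δ := min δ₀ 1
  have hδ : 0 < δ := lt_min hδ₀ one_pos
  have hJ : Icc (u - δ) (u + δ) ⊆ Metric.closedBall u δ₀ := by
    rw [Real.closedBall_eq_Icc]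
    exact Icc_subset_Icc (by linarith [min_le_left δ₀ 1]) (by linarith [min_le_left δ₀ 1])
  obtain ⟨M, hM⟩ := hfar δ hδ
  set g : ℝ → ℝ := fun s => ‖(2 * δ ^ (1 - s)) • c - (2:ℝ) • c‖ + (1 - s) * (max M 0 * (b - a))
  have hg : Tendsto g (𝓝[<] 1) (𝓝 0) := by
    refine tendsto_nhdsWithin_of_tendsto_nhds (Continuous.tendsto' ?_ 1 0 (by simp [g]))
    have : Continuous fun s : ℝ => δ ^ (1 - s) :=
      continuous_const.rpow (continuous_const.sub continuous_id) fun _ => Or.inl hδ.ne'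
    fun_prop
  filter_upwards [hg.eventually (gt_mem_nhds (half_pos hε)), Ioo_mem_nhdsLT one_pos]
    with s hgs hs
  have hmain := norm_one_sub_smul_setIntegral_sub_le_of_near_far hs.2 hδ.le
    (fun v hv => Ioo_subset_Icc_self (hball (hJ hv)).2) (le_max_right M 0) (hF s hs)
    (fun v hv hvu => (hball (hJ hv)).1 hvu s hs)
    fun v hv hδv => (hM s hs v hv hδv.le).trans (le_max_left _ _)
  have hδs : δ ^ (1 - s) ≤ 1 := Real.rpow_le_one hδ.le (min_le_right _ _) (by linarith [hs.2])
  rw [dist_eq_norm]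
  calc ‖(1 - s) • (∫ v in Icc a b, F s v) - (2:ℝ) • c‖
      ≤ ‖(1 - s) • (∫ v in Icc a b, F s v) - (2 * δ ^ (1 - s)) • c‖
        + ‖(2 * δ ^ (1 - s)) • c - (2:ℝ) • c‖ := norm_sub_le_norm_sub_add_norm_sub _ _ _
    _ ≤ 2 * (ε / 4) * δ ^ (1 - s) + g s := by simp only [g]; linarith
    _ < ε := by nlinarith

theorem norm_inv_rpow_smul_sub_rpow_smul_le {t x s : ℝ} (N c : E) (ht : t ≠ 0) (hx : 0 < x) :
    ‖(x ^ (2 + s))⁻¹ • N - |t| ^ (-s) • c‖ ≤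
      |t| ^ (-s) * ((|t| / x) ^ (2 + s) * (‖N - t ^ 2 • c‖ / t ^ 2) +
        |(|t| / x) ^ (2 + s) - 1| * ‖c‖) := by
  have ht' : 0 < |t| := abs_pos.2 ht
  have hA : 0 < (x ^ (2 + s))⁻¹ := inv_pos.2 (rpow_pos_of_pos hx _)
  have hAt : (x ^ (2 + s))⁻¹ * t ^ 2 = |t| ^ (-s) * (|t| / x) ^ (2 + s) := by
    rw [div_rpow ht'.le hx.le, rpow_add ht', rpow_neg ht'.le, rpow_two, sq_abs]
    field_simp
  calc ‖(x ^ (2 + s))⁻¹ • N - |t| ^ (-s) • c‖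
      = ‖(x ^ (2 + s))⁻¹ • (N - t ^ 2 • c) + ((x ^ (2 + s))⁻¹ * t ^ 2 - |t| ^ (-s)) • c‖ := by
        congr 1; module
    _ ≤ (x ^ (2 + s))⁻¹ * ‖N - t ^ 2 • c‖ + |(x ^ (2 + s))⁻¹ * t ^ 2 - |t| ^ (-s)| * ‖c‖ := by
        refine (norm_add_le _ _).trans_eq ?_
        rw [norm_smul, norm_smul, Real.norm_of_nonneg hA.le, Real.norm_eq_abs]
    _ = _ := by
        have hq : |t| ^ (-s) * (|t| / x) ^ (2 + s) * (‖N - t ^ 2 • c‖ / t ^ 2) =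
            (x ^ (2 + s))⁻¹ * ‖N - t ^ 2 • c‖ := by
          rw [← hAt]; field_simp
        rw [hAt, ← mul_sub_one, abs_mul, abs_of_pos (rpow_pos_of_pos ht' _)]
        linear_combination -hq

theorem eventually_norm_inv_rpow_smul_sub_le {u ε : ℝ} {x : ℝ → ℝ} {N : ℝ → E} {c : E}
    (hx0 : ∀ v, 0 ≤ x v)
    (hx : Tendsto (fun v => |v - u| / x v) (𝓝[≠] u) (𝓝 1))
    (hN : (fun v => N v - (v - u) ^ 2 • c) =o[𝓝[≠] u] fun v => (v - u) ^ 2) (hε : 0 < ε) :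
    ∀ᶠ v in 𝓝[≠] u, ∀ s ∈ Icc (0:ℝ) 1,
      ‖(x v ^ (2 + s))⁻¹ • N v - |v - u| ^ (-s) • c‖ ≤ ε * |v - u| ^ (-s) := by
  set η := min 1 (ε / 2 / (‖c‖ + 1))
  have hη : 0 < η := lt_min one_pos (by positivity)
  have hηc : η * ‖c‖ ≤ ε / 2 :=
    calc η * ‖c‖ ≤ ε / 2 / (‖c‖ + 1) * (‖c‖ + 1) := by
          gcongr
          · exact min_le_right _ _
          · linarith
      _ = ε / 2 := by field_simp
  have hpow : ∀ n : ℝ, ∀ᶠ v in 𝓝[≠] u, |(|v - u| / x v) ^ n - 1| < η := fun n => by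
    have h := ((hx.rpow_const (p := n) (Or.inl one_ne_zero)).sub_const 1).abs
    rw [one_rpow, sub_self, abs_zero] at h
    exact h.eventually (gt_mem_nhds hη)
  filter_upwards [hpow 2, hpow 3, hx.eventually (eventually_gt_nhds one_pos),
    hN.bound (by positivity : 0 < ε / 4), self_mem_nhdsWithin] with v h2 h3 hρ hNv hvu s hs
  have ht : v - u ≠ 0 := sub_ne_zero.2 hvu
  have hxv : 0 < x v := (hx0 v).lt_of_ne fun h => by simp [← h] at hρ
  -- The exponent `2 + s` stays in `[2, 3]`, so this power tends to `1` uniformly in `s`.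
  have hR : |(|v - u| / x v) ^ (2 + s) - 1| ≤ η :=
    (abs_rpow_sub_one_le_max hρ (by linarith [hs.1]) (by linarith [hs.2])).trans
      (max_le h2.le h3.le)
  have hR2 : (|v - u| / x v) ^ (2 + s) ≤ 2 := by
    linarith [(abs_le.1 hR).2, min_le_left 1 (ε / 2 / (‖c‖ + 1))]
  have hNv' : ‖N v - (v - u) ^ 2 • c‖ / (v - u) ^ 2 ≤ ε / 4 := by
    rw [div_le_iff₀ (by positivity)]
    simpa only [Real.norm_of_nonneg (sq_nonneg (v - u))] using hNv
  calc ‖(x v ^ (2 + s))⁻¹ • N v - |v - u| ^ (-s) • c‖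
      ≤ |v - u| ^ (-s) * ((|v - u| / x v) ^ (2 + s) * (‖N v - (v - u) ^ 2 • c‖ / (v - u) ^ 2) +
          |(|v - u| / x v) ^ (2 + s) - 1| * ‖c‖) :=
        norm_inv_rpow_smul_sub_rpow_smul_le (N v) c ht hxv
    _ ≤ |v - u| ^ (-s) * (2 * (ε / 4) + η * ‖c‖) := by gcongr
    _ ≤ ε * |v - u| ^ (-s) := by
        rw [mul_comm ε]
        gcongr
        linarith

theorem isLittleO_taylor_two {f f' : ℝ → E} {f'' : E} {x₀ : ℝ}
    (hf : ∀ᶠ x in 𝓝 x₀, HasDerivAt f (f' x) x) (hf' : HasDerivAt f' f'' x₀) :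
    (fun x => f x - f x₀ - (x - x₀) • f' x₀ - ((x - x₀) ^ 2 / 2) • f'') =o[𝓝 x₀]
      fun x => (x - x₀) ^ 2 := by
  obtain ⟨r, hr, hball⟩ := Metric.eventually_nhds_iff_ball.1 hf
  have hnhds : 𝓝[Metric.ball x₀ r] x₀ = 𝓝 x₀ := nhdsWithin_eq_nhds.2 (Metric.ball_mem_nhds x₀ hr)
  have hderiv : ∀ x ∈ Metric.ball x₀ r, HasDerivWithinAt
      (fun x => f x - (x - x₀) • f' x₀ - ((x - x₀) ^ 2 / 2) • f'')
      (f' x - f' x₀ - (x - x₀) • f'') (Metric.ball x₀ r) x := by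
    intro x hx
    have hsq : HasDerivAt (fun y => (y - x₀) ^ 2 / 2) (x - x₀) x := by
      simpa using (((hasDerivAt_id x).sub_const x₀).pow 2).div_const 2
    exact ((((hball x hx).sub (((hasDerivAt_id x).sub_const x₀).smul_const (f' x₀))).sub
      (hsq.smul_const f'')).hasDerivWithinAt).congr_deriv (by simp)
  have hrem : (fun x => f' x - f' x₀ - (x - x₀) • f'') =o[𝓝[Metric.ball x₀ r] x₀]
      fun x => (x - x₀) ^ 1 := by
    simpa [hnhds] using hasDerivAt_iff_isLittleO.1 hf'
  have h := (convex_ball x₀ r).isLittleO_pow_succ_real (Metric.mem_ball_self hr) hderiv hrem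
  rw [hnhds] at h
  exact h.congr_left fun x => by simp; abel

theorem HasDerivAt.tendsto_abs_sub_div_norm_sub {f : ℝ → E} {f' : E} {x : ℝ}
    (hf : HasDerivAt f f' x) (hf' : f' ≠ 0) :
    Tendsto (fun y => |y - x| / ‖f x - f y‖) (𝓝[≠] x) (𝓝 ‖f'‖⁻¹) := by
  refine ((hasDerivAt_iff_tendsto_slope.1 hf).norm.inv₀ (norm_ne_zero_iff.2 hf')).congr fun y => ?_
  rw [slope_def_module, norm_smul, norm_inv, Real.norm_eq_abs, mul_inv, inv_inv, norm_sub_rev,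
    div_eq_mul_inv]

end NormedSpace

section InnerProductSpace

variable {E : Type*} [NormedAddCommGroup E] [InnerProductSpace ℝ E]

theorem HasDerivAt.inner_eq_zero_of_eventually_norm_eq {f : ℝ → E} {f' : E} {x : ℝ}
    (hf : HasDerivAt f f' x) (hnorm : ∀ᶠ y in 𝓝 x, ‖f y‖ = ‖f x‖) : ⟪f x, f'⟫ = 0 := by
  have hconst : HasDerivAt (fun y => ⟪f y, f y⟫) 0 x :=
    (hasDerivAt_const x (‖f x‖ ^ 2)).congr_of_eventuallyEq <| hnorm.mono fun y hy => by
      simp only [real_inner_self_eq_norm_sq, hy]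
  have h := (hf.inner ℝ hf).unique hconst
  rw [real_inner_comm (f x) f'] at h
  linarith

theorem isLittleO_inner_smul_sub_inner_smul_add {α : Type*} {l : Filter α} {t : α → ℝ}
    {p q : α → E} {e w : E} (he : ‖e‖ = 1) (hew : ⟪e, w⟫ = 0)
    (hp : (fun a => p a + t a • e + (t a ^ 2 / 2) • w) =o[l] fun a => t a ^ 2)
    (hq : (fun a => q a - e - t a • w) =o[l] t)
    (hpO : p =O[l] t) (hqO : q =O[l] fun _ => (1:ℝ)) :
    (fun a => ⟪p a, e⟫ • q a - ⟪e, q a⟫ • p a + (t a ^ 2 / 2) • w) =o[l] fun a => t a ^ 2 := by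
  set r₁ := fun a => p a + t a • e + (t a ^ 2 / 2) • w
  set r₂ := fun a => q a - e - t a • w
  have hee : ⟪e, e⟫ = 1 := by rw [real_inner_self_eq_norm_sq, he, one_pow]
  have hwe : ⟪w, e⟫ = 0 := by rw [real_inner_comm, hew]
  have hr₁e : (fun a => ⟪r₁ a, e⟫) =o[l] fun a => t a ^ 2 :=
    (isBigO_of_le l fun a => by simpa [he] using abs_real_inner_le_norm (r₁ a) e).trans_isLittleO hp
  have her₂ : (fun a => ⟪e, r₂ a⟫) =o[l] t :=
    (isBigO_of_le l fun a => by simpa [he] using abs_real_inner_le_norm e (r₂ a)).trans_isLittleO hq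
  -- The terms of order `t` and `t²` cancel since `⟪e, e⟫ = 1` and `⟪e, w⟫ = 0`.
  have key : ∀ a, ⟪p a, e⟫ • q a - ⟪e, q a⟫ • p a + (t a ^ 2 / 2) • w =
      ⟪r₁ a, e⟫ • q a - t a • r₂ a - ⟪e, r₂ a⟫ • p a - r₁ a := by
    intro a
    have hpe : ⟪p a, e⟫ = ⟪r₁ a, e⟫ - t a := by
      simp [r₁, inner_add_left, inner_smul_left, he, hwe]
    have heq : ⟪e, q a⟫ = ⟪e, r₂ a⟫ + 1 := by
      simp only [r₂, inner_sub_right, inner_smul_right, hee, hew]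
      ring
    rw [hpe, heq]
    simp only [r₁, r₂]
    module
  have h₁ := hr₁e.smul_isBigO hqO
  have h₂ := (isBigO_refl t l).smul_isLittleO hq
  have h₃ := her₂.smul_isBigO hpO
  simp only [smul_eq_mul, mul_one, ← sq] at h₁ h₂ h₃
  exact (((h₁.sub h₂).sub h₃).sub hp).congr_left fun a => (key a).symm

-- `fracCurvature d ℓ s γ γ' u` is definitionally
-- `s • ∫ v in Icc (-(ℓ / 2)) (ℓ / 2), fracCurvatureIntegrand γ γ' u s v`.
def fracCurvatureIntegrand (γ γ' : ℝ → E) (u s v : ℝ) : E :=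
  (‖γ u - γ v‖ ^ (2 + s))⁻¹ • (⟪γ u - γ v, γ' u⟫ • γ' v - ⟪γ' u, γ' v⟫ • (γ u - γ v))

theorem aestronglyMeasurable_fracCurvatureIntegrand {γ γ' : ℝ → E} {a b : ℝ}
    (hγ : ContinuousOn γ (Icc a b)) (hγ' : ContinuousOn γ' (Icc a b)) (u s : ℝ) :
    AEStronglyMeasurable (fracCurvatureIntegrand γ γ' u s) (volume.restrict (Icc a b)) := by
  have h₁ := hγ.aestronglyMeasurable (μ := volume) measurableSet_Icc
  have h₂ := hγ'.aestronglyMeasurable (μ := volume) measurableSet_Icc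
  have hx : AEStronglyMeasurable (fun v => (‖γ u - γ v‖ ^ (2 + s))⁻¹) (volume.restrict (Icc a b)) :=
    ((aestronglyMeasurable_const.sub h₁).norm.aemeasurable.pow_const _).inv.aestronglyMeasurable
  unfold fracCurvatureIntegrand
  fun_prop

theorem norm_fracCurvatureIntegrand_le {γ γ' : ℝ → E} {u s v : ℝ} (hu : ‖γ' u‖ ≤ 1)
    (hv : ‖γ' v‖ ≤ 1) (huv : γ u ≠ γ v) :
    ‖fracCurvatureIntegrand γ γ' u s v‖ ≤ 2 * (‖γ u - γ v‖ ^ (1 + s))⁻¹ := by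
  set p := γ u - γ v
  have hp : 0 < ‖p‖ := norm_pos_iff.2 (sub_ne_zero.2 huv)
  have hN : ‖⟪p, γ' u⟫ • γ' v - ⟪γ' u, γ' v⟫ • p‖ ≤ 2 * ‖p‖ := by
    refine (norm_sub_le _ _).trans ?_
    rw [norm_smul, norm_smul]
    have h₁ := norm_inner_le_norm (𝕜 := ℝ) p (γ' u)
    have h₂ := norm_inner_le_norm (𝕜 := ℝ) (γ' u) (γ' v)
    have : ‖γ' u‖ * ‖γ' v‖ ≤ 1 := mul_le_one₀ hu (norm_nonneg _) hv
    nlinarith [norm_nonneg p, norm_nonneg (γ' u), norm_nonneg (γ' v), norm_nonneg ⟪p, γ' u⟫]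
  have hA : 0 < (‖p‖ ^ (2 + s))⁻¹ := inv_pos.2 (rpow_pos_of_pos hp _)
  calc ‖fracCurvatureIntegrand γ γ' u s v‖ ≤ (‖p‖ ^ (2 + s))⁻¹ * (2 * ‖p‖) := by
        rw [fracCurvatureIntegrand, norm_smul, Real.norm_of_nonneg hA.le]
        exact mul_le_mul_of_nonneg_left hN hA.le
    _ = 2 * (‖p‖ ^ (1 + s))⁻¹ := by
        rw [show 2 + s = (1 + s) + 1 by ring, rpow_add_one hp.ne']
        field_simp

theorem exists_norm_fracCurvatureIntegrand_le {γ γ' : ℝ → E} {a b u δ : ℝ}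
    (hγ : ContinuousOn γ (Icc a b)) (hinj : InjOn γ (Icc a b))
    (hγ' : ∀ v ∈ Icc a b, ‖γ' v‖ ≤ 1) (hu : u ∈ Icc a b) (hδ : 0 < δ) :
    ∃ M, ∀ s ∈ Icc (0:ℝ) 1, ∀ v ∈ Icc a b, δ ≤ |v - u| →
      ‖fracCurvatureIntegrand γ γ' u s v‖ ≤ M := by
  obtain ⟨m, hm, hmle⟩ := exists_pos_le_dist_of_injOn hγ hinj hu hδ
  set m' := min m 1
  have hm' : 0 < m' := lt_min hm one_pos
  refine ⟨2 * (m' ^ (2:ℝ))⁻¹, fun s hs v hv hδv => ?_⟩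
  have hmv : m' ≤ ‖γ u - γ v‖ :=
    (min_le_left _ _).trans ((hmle v hv hδv).trans_eq (dist_eq_norm _ _))
  have huv : γ u ≠ γ v := fun h => by simp [h] at hmv; linarith
  refine (norm_fracCurvatureIntegrand_le (hγ' u hu) (hγ' v hv) huv).trans ?_
  gcongr 2 * ?_
  exact inv_anti₀ (by positivity)
    ((rpow_le_rpow_of_exponent_ge hm' (min_le_right _ _) (by linarith [hs.2])).trans
      (rpow_le_rpow hm'.le hmv (by linarith [hs.1])))

theorem eventually_norm_fracCurvatureIntegrand_sub_le {γ γ' : ℝ → E} {w : E} {u ε : ℝ}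
    (hγ : ∀ᶠ t in 𝓝 u, HasDerivAt γ (γ' t) t) (hγ' : HasDerivAt γ' w u)
    (hnorm : ∀ᶠ t in 𝓝 u, ‖γ' t‖ = 1) (hε : 0 < ε) :
    ∀ᶠ v in 𝓝[≠] u, ∀ s ∈ Icc (0:ℝ) 1,
      ‖fracCurvatureIntegrand γ γ' u s v - |v - u| ^ (-s) • (-(2:ℝ)⁻¹ • w)‖ ≤
        ε * |v - u| ^ (-s) := by
  have hu : ‖γ' u‖ = 1 := hnorm.self_of_nhds
  have hγu : HasDerivAt γ (γ' u) u := hγ.self_of_nhds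
  have hortho : ⟪γ' u, w⟫ = 0 :=
    hγ'.inner_eq_zero_of_eventually_norm_eq (hnorm.mono fun t ht => ht.trans hu.symm)
  have hp : (fun v => (γ u - γ v) + (v - u) • γ' u + ((v - u) ^ 2 / 2) • w) =o[𝓝 u]
      fun v => (v - u) ^ 2 :=
    (isLittleO_taylor_two hγ hγ').neg_left.congr_left fun v => by abel
  have hN := isLittleO_inner_smul_sub_inner_smul_add (t := fun v => v - u)
    (p := fun v => γ u - γ v) (q := γ') hu hortho hp (hasDerivAt_iff_isLittleO.1 hγ')
    (hγu.isBigO_sub.neg_left.congr_left fun v => neg_sub _ _)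
    (hγ'.continuousAt.tendsto.isBigO_one ℝ)
  have hx := hγu.tendsto_abs_sub_div_norm_sub (norm_ne_zero_iff.1 (hu ▸ one_ne_zero))
  rw [hu, inv_one] at hx
  exact eventually_norm_inv_rpow_smul_sub_le (fun v => norm_nonneg _) hx
    ((hN.mono nhdsWithin_le_nhds).congr_left fun v => by module) hε

end InnerProductSpace

theorem fractional_curvature_limit_s_to_one_general (d : ℕ) (ℓ : ℝ)
    (γ γ' γ'' : ℝ → EuclideanSpace ℝ (Fin d))
    (hderiv : ∀ u ∈ Set.Icc (-(ℓ / 2)) (ℓ / 2), HasDerivAt γ (γ' u) u)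
    (hderiv' : ∀ u ∈ Set.Icc (-(ℓ / 2)) (ℓ / 2), HasDerivAt γ' (γ'' u) u)
    (harc : ∀ u ∈ Set.Icc (-(ℓ / 2)) (ℓ / 2), ‖γ' u‖ = 1)
    (hsimple : Set.InjOn γ (Set.Icc (-(ℓ / 2)) (ℓ / 2))) :
    ∀ u ∈ Set.Ioo (-(ℓ / 2)) (ℓ / 2),
      Filter.Tendsto (fun s : ℝ => (1 - s) • fracCurvature d ℓ s γ γ' u)
        (nhdsWithin 1 (Set.Iio 1)) (nhds (-γ'' u)) := by
  intro u hu
  have hI : Icc (-(ℓ / 2)) (ℓ / 2) ∈ 𝓝 u := Icc_mem_nhds hu.1 hu.2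
  have huI : u ∈ Icc (-(ℓ / 2)) (ℓ / 2) := mem_of_mem_nhds hI
  have hγ : ContinuousOn γ (Icc (-(ℓ / 2)) (ℓ / 2)) := fun v hv =>
    (hderiv v hv).continuousAt.continuousWithinAt
  have hγ' : ContinuousOn γ' (Icc (-(ℓ / 2)) (ℓ / 2)) := fun v hv =>
    (hderiv' v hv).continuousAt.continuousWithinAt
  have hlim := tendsto_one_sub_smul_setIntegral_of_near_far
    (F := fracCurvatureIntegrand γ γ' u) hu
    (fun s _ => aestronglyMeasurable_fracCurvatureIntegrand hγ hγ' u s)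
    (fun ε hε => (eventually_norm_fracCurvatureIntegrand_sub_le (eventually_of_mem hI hderiv)
      (hderiv' u huI) (eventually_of_mem hI harc) hε).mono fun v hv s hs =>
        hv s (Ioo_subset_Icc_self hs))
    (fun δ hδ => (exists_norm_fracCurvatureIntegrand_le hγ hsimple (fun v hv => (harc v hv).le)
      huI hδ).imp fun M hM s hs => hM s (Ioo_subset_Icc_self hs))
  have h := (tendsto_nhdsWithin_of_tendsto_nhds tendsto_id).smul hlim
  rw [one_smul, smul_smul, show (2:ℝ) * -2⁻¹ = -1 by norm_num, neg_one_smul] at h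
  exact h.congr fun s => smul_comm s (1 - s) _

/-- For a simple `C²` arc-length parametrized curve,
`(1−s)·k_s(u,γ) → −γ''(u)` as `s ↑ 1` at every interior parameter `u`. -/
theorem fractional_curvature_limit_s_to_one (d : ℕ) (ℓ : ℝ) (hℓ : 0 < ℓ)
    (γ γ' γ'' : ℝ → EuclideanSpace ℝ (Fin d))
    (hderiv : ∀ u ∈ Set.Icc (-(ℓ / 2)) (ℓ / 2), HasDerivAt γ (γ' u) u)
    (hderiv' : ∀ u ∈ Set.Icc (-(ℓ / 2)) (ℓ / 2), HasDerivAt γ' (γ'' u) u)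
    (hC2 : ContinuousOn γ'' (Set.Icc (-(ℓ / 2)) (ℓ / 2)))
    (harc : ∀ u ∈ Set.Icc (-(ℓ / 2)) (ℓ / 2), ‖γ' u‖ = 1)
    (hsimple : Set.InjOn γ (Set.Icc (-(ℓ / 2)) (ℓ / 2))) :
    ∀ u ∈ Set.Ioo (-(ℓ / 2)) (ℓ / 2),
      Filter.Tendsto (fun s : ℝ => (1 - s) • fracCurvature d ℓ s γ γ' u)
        (nhdsWithin 1 (Set.Iio 1)) (nhds (-γ'' u)) :=
  fractional_curvature_limit_s_to_one_general d ℓ γ γ' γ'' hderiv hderiv' harc hsimple
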